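/- arXiv:1909.13448 — 2 statements merged into one kernel-verified Lean document; each statement's English description precedes it below -/
import Mathlib

section
/- For all u ≥ 0 and s ∈ [0,1) with G(u) = u⁴/4 + G₁(u), where G₁(u) = −u·cos u + sin u + 2u·sin u − (u²−2)·cos u − 2 + (1/2)(u − (1/2)sin 2u), there exist constants C, α₀ > 0 such that for α ≥ α₀ and s ∈ [0,1): |α²cos α − α²s²cos(αs)| / (α⁴(1 − s⁴)) ≤ C·α^{−1}. -/
/-! Split `cos α - s² cos (α s) = (cos α - cos (α s)) + (1 - s²) cos (α s)`. Since cosine is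
1-Lipschitz and `1 - s² ≤ 2 (1 - s)`, this is at most `(α + 2)(1 - s)`, and `1 - s ≤ 1 - s⁴`;
so the numerator is `O(α³ (1 - s⁴))` while the denominator is `α⁴ (1 - s⁴)`. -/

open Real

lemma abs_cos_sub_sq_mul_cos_mul_le (x : ℝ) {s : ℝ} (hs₀ : 0 ≤ s) (hs₁ : s ≤ 1) :
    |cos x - s ^ 2 * cos (x * s)| ≤ (|x| + 2) * (1 - s) := by
  have hlip : |cos x - cos (x * s)| ≤ |x| * (1 - s) := by
    calc |cos x - cos (x * s)| ≤ |x - x * s| := abs_cos_sub_cos_le _ _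
      _ = |x| * (1 - s) := by rw [← mul_one_sub, abs_mul, abs_of_nonneg (sub_nonneg.2 hs₁)]
  have hsq : |(1 - s ^ 2) * cos (x * s)| ≤ 2 * (1 - s) := by
    rw [abs_mul, abs_of_nonneg (by nlinarith)]
    calc (1 - s ^ 2) * |cos (x * s)| ≤ (1 - s ^ 2) * 1 :=
          mul_le_mul_of_nonneg_left (abs_cos_le_one _) (by nlinarith)
      _ ≤ 2 * (1 - s) := by nlinarith
  calc |cos x - s ^ 2 * cos (x * s)|
      = |(cos x - cos (x * s)) + (1 - s ^ 2) * cos (x * s)| := by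
        congr 1; ring
    _ ≤ |cos x - cos (x * s)| + |(1 - s ^ 2) * cos (x * s)| := abs_add_le _ _
    _ ≤ (|x| + 2) * (1 - s) := by linarith

lemma one_sub_le_one_sub_pow {s : ℝ} (hs₀ : 0 ≤ s) (hs₁ : s ≤ 1) {n : ℕ} (hn : n ≠ 0) :
    1 - s ≤ 1 - s ^ n := by
  linarith [pow_le_of_le_one hs₀ hs₁ hn]

theorem stmt_14 :
    ∃ C > (0:ℝ), ∃ α₀ > (0:ℝ), ∀ α : ℝ, α₀ ≤ α → ∀ s : ℝ, 0 ≤ s → s < 1 →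
      |α ^ 2 * Real.cos α - α ^ 2 * s ^ 2 * Real.cos (α * s)| / (α ^ 4 * (1 - s ^ 4))
        ≤ C / α := by
  refine ⟨3, by norm_num, 1, by norm_num, fun α hα s hs₀ hs₁ => ?_⟩
  have hα₀ : 0 < α := by linarith
  have hden : 0 < α ^ 4 * (1 - s ^ 4) := by
    have : s ^ 4 < 1 := pow_lt_one₀ hs₀ hs₁ (by norm_num)
    have : 0 < 1 - s ^ 4 := by linarith
    positivity
  have hnum : |α ^ 2 * cos α - α ^ 2 * s ^ 2 * cos (α * s)| ≤ α ^ 2 * ((α + 2) * (1 - s)) := by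
    have hfactor : α ^ 2 * cos α - α ^ 2 * s ^ 2 * cos (α * s)
        = α ^ 2 * (cos α - s ^ 2 * cos (α * s)) := by ring
    have hbound := abs_cos_sub_sq_mul_cos_mul_le α hs₀ hs₁.le
    rw [abs_of_pos hα₀] at hbound
    rw [hfactor, abs_mul, abs_of_nonneg (sq_nonneg α)]
    exact mul_le_mul_of_nonneg_left hbound (sq_nonneg α)
  have hpow := one_sub_le_one_sub_pow hs₀ hs₁.le (n := 4) (by norm_num)
  rw [div_le_div_iff₀ hden hα₀]
  calc |α ^ 2 * cos α - α ^ 2 * s ^ 2 * cos (α * s)| * α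
      ≤ α ^ 2 * ((α + 2) * (1 - s)) * α := mul_le_mul_of_nonneg_right hnum hα₀.le
    _ ≤ 3 * (α ^ 4 * (1 - s ^ 4)) := by
      have h1s : 0 ≤ 1 - s := by linarith
      have : 0 ≤ α ^ 3 := by positivity
      nlinarith [mul_le_mul_of_nonneg_left hpow this, mul_nonneg this h1s,
        mul_nonneg (mul_nonneg (sq_nonneg α) h1s) (sub_nonneg.2 hα)]
end

section
/- There exist constants C, α₀ > 0 such that for all α ≥ α₀ and s ∈ [0,1): |α·cos α − α·s·cos(αs)|/(α⁴(1−s⁴)) ≤ C·α^{−2} and |sin α − sin(αs)|/(α⁴(1−s⁴)) ≤ C·α^{−3}. -/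
/-! Both numerators are Lipschitz-small: writing `α cos α − αs cos(αs)` as
`α (cos α − cos(αs)) + α(1 − s) cos(αs)` and using that `sin` and `cos` are 1-Lipschitz gives
`|I₁| ≤ (α + 1) α (1 − s)` and `|I₂| ≤ α (1 − s)`, while `1 − s ≤ 1 − s⁴` on `[0, 1]`. -/

open Real

lemma Real.abs_mul_cos_sub_mul_cos_le (a b : ℝ) :
    |a * cos a - b * cos b| ≤ (|a| + 1) * |a - b| :=
  calc |a * cos a - b * cos b| = |a * (cos a - cos b) + (a - b) * cos b| := by ring_nf
    _ ≤ |a| * |a - b| + |a - b| * 1 := by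
      refine (abs_add_le _ _).trans (add_le_add ?_ ?_) <;> rw [abs_mul]
      · exact mul_le_mul_of_nonneg_left (abs_cos_sub_cos_le a b) (abs_nonneg a)
      · exact mul_le_mul_of_nonneg_left (abs_cos_le_one b) (abs_nonneg _)
    _ = (|a| + 1) * |a - b| := by ring

lemma div_pow_add_mul_le_div_pow {x c α t : ℝ} {m n : ℕ} (hα : 0 < α) (ht : 0 < t)
    (hx : x ≤ c * α ^ m * t) : x / (α ^ (m + n) * t) ≤ c / α ^ n := by
  rw [div_le_div_iff₀ (by positivity) (by positivity)]
  calc x * α ^ n ≤ c * α ^ m * t * α ^ n := mul_le_mul_of_nonneg_right hx (by positivity)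
    _ = c * (α ^ (m + n) * t) := by ring

theorem stmt_15 :
    ∃ C > (0:ℝ), ∃ α₀ > (0:ℝ), ∀ α : ℝ, α₀ ≤ α → ∀ s : ℝ, 0 ≤ s → s < 1 →
      |α * Real.cos α - α * s * Real.cos (α * s)| / (α ^ 4 * (1 - s ^ 4)) ≤ C / α ^ 2 ∧
      |Real.sin α - Real.sin (α * s)| / (α ^ 4 * (1 - s ^ 4)) ≤ C / α ^ 3 := by
  refine ⟨2, two_pos, 1, one_pos, fun α hα s hs hs1 => ?_⟩
  have hα0 : 0 < α := one_pos.trans_le hα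
  have hgap : 0 < 1 - s ^ 4 := sub_pos.2 (pow_lt_one₀ hs hs1 (by norm_num))
  have hs_le : 1 - s ≤ 1 - s ^ 4 := sub_le_sub_left (pow_le_of_le_one hs hs1.le (by norm_num)) 1
  have hdiff : |α - α * s| = α * (1 - s) := by
    rw [← mul_one_sub, abs_of_nonneg (mul_nonneg hα0.le (sub_nonneg.2 hs1.le))]
  constructor
  · refine div_pow_add_mul_le_div_pow (m := 2) (n := 2) hα0 hgap ?_
    calc |α * cos α - α * s * cos (α * s)| ≤ (|α| + 1) * |α - α * s| :=
          abs_mul_cos_sub_mul_cos_le α (α * s)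
      _ = (α + 1) * α * (1 - s) := by rw [abs_of_pos hα0, hdiff]; ring
      _ ≤ 2 * α * α * (1 - s ^ 4) := by gcongr; linarith
      _ = 2 * α ^ 2 * (1 - s ^ 4) := by ring
  · refine div_pow_add_mul_le_div_pow (m := 1) (n := 3) hα0 hgap ?_
    calc |sin α - sin (α * s)| ≤ |α - α * s| := abs_sin_sub_sin_le α (α * s)
      _ = α * (1 - s) := hdiff
      _ ≤ 2 * α ^ 1 * (1 - s ^ 4) := by nlinarith
end
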